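/- Let R be an idempotent semiring, K a simple R-algebra (an idempotent semiring), and x ∈ K. Then x is quasiintegral over R if and only if every homomorphism v : K → Γ_max into Γ_max for a linearly ordered abelian group Γ which satisfies v(r•1) ≤ 1 for all r ∈ R also satisfies v(x) ≤ 1. -/

import Mathlib

universe u

/-- A saturated subsemiring of an idempotent semiring `A`: a subsemiring (as a set)
that is saturated for the canonical order `a ≤ b ↔ a + b = b`. -/
def IsSatSubsemiring {A : Type*} [CommSemiring A] (S : Set A) : Prop :=
  0 ∈ S ∧ 1 ∈ S ∧ (∀ a b, a ∈ S → b ∈ S → a + b ∈ S) ∧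
    (∀ a b, a ∈ S → b ∈ S → a * b ∈ S) ∧ ∀ a b, a + b = b → b ∈ S → a ∈ S

/-- `R⟨x⟩`: the smallest saturated subsemiring of `A` containing `x` and the image
of `R`. -/
def satGen (R : Type*) {A : Type*} [CommSemiring R] [CommSemiring A] [Algebra R A]
    (x : A) : Set A :=
  ⋂₀ {S : Set A | IsSatSubsemiring S ∧ x ∈ S ∧ Set.range (algebraMap R A) ⊆ S}

/-- `x ∈ A` is integral over `R` if `R⟨x⟩` is a finite `R`-module: there is some
`m ∈ R⟨x⟩` such that every `y ∈ R⟨x⟩` satisfies `y ≤ r • m` for some `r ∈ R`. -/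
def IsIntegralOne (R : Type*) {A : Type*} [CommSemiring R] [CommSemiring A] [Algebra R A]
    (x : A) : Prop :=
  ∃ m ∈ satGen R x, ∀ y ∈ satGen R x, ∃ r : R, y + r • m = r • m

/-- `x ∈ A` is quasiintegral over `R` if there exists an `R⟨x⟩`-submodule `M ⊆ A` which
is finite as an `R`-module and faithful as an `R⟨x⟩`-module. -/
def IsQuasiIntegralOne (R : Type*) {A : Type*} [CommSemiring R] [CommSemiring A]
    [Algebra R A] (x : A) : Prop :=
  ∃ M : Set A,
    0 ∈ M ∧ (∀ a b, a ∈ M → b ∈ M → a + b ∈ M) ∧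
    (∀ t ∈ satGen R x, ∀ m ∈ M, t * m ∈ M) ∧
    (∃ m₀ ∈ M, ∀ y ∈ M, ∃ r : R, y + r • m₀ = r • m₀) ∧
    ∀ t ∈ satGen R x, t ≠ 0 → ∃ m ∈ M, t * m ≠ 0

/-!
A faithful `R⟨x⟩`-module dominated by `r • m₀` contains `x * m₀ ≤ r • m₀` with `m₀ ≠ 0`. Applying
a valuation that is `≤ 1` on `R` and cancelling `v m₀`, which is nonzero because the kernel of `v`
is a saturated ideal, gives `v x ≤ 1`.

Conversely, if `x` is not quasiintegral then `x * D ≤ r • D` forces `D = 0`: otherwise the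
saturated `R⟨x⟩`-module generated by `D` is finite and faithful. Read `a ≼ b` as `v a ≤ v b`; then
`a ≼ b :↔ ∃ r, a ≤ r • b` is a multiplicative preorder in which `x * D ≼ D` only for `D = 0`.
Take a maximal such preorder (Zorn). If `a ⋠ b`, adjoining `a ≼ b` (by identifying `b` with
`a + b`) must destroy this property, which yields `D ≠ 0` and `n` with `x D bⁿ ≼ D (a + b)ⁿ`. Two
such witnesses, for `a ⋠ b` and `b ⋠ a`, combine via
`(a + b)ᵐ⁺ⁿ ≤ aᵐ (a + b)ⁿ + bⁿ (a + b)ᵐ` into a nonzero `P` with `x P ≼ P`; so the preorder is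
total, and similarly cancellative. The classes of nonzero elements then form a linearly ordered
cancellative monoid whose Grothendieck group receives a valuation with `v ≤ 1` on `R` and
`v x > 1`.
-/

section IdemCommSemiring

variable {K : Type*} [IdemCommSemiring K]

theorem add_pow_add_le (a b : K) (m n : ℕ) :
    (a + b) ^ (m + n) ≤ a ^ m * (a + b) ^ n + b ^ n * (a + b) ^ m := by
  induction m generalizing n with
  | zero => simp
  | succ m ihm =>
    induction n with
    | zero => simp
    | succ n ihn =>
      have ha : a * (a + b) ^ m ≤ (a + b) ^ (m + 1) := by
        rw [pow_succ']; gcongr; exact le_self_add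
      have hb : b * (a + b) ^ n ≤ (a + b) ^ (n + 1) := by
        rw [pow_succ']; gcongr; exact le_add_self
      calc (a + b) ^ (m + 1 + (n + 1))
          = a * (a + b) ^ (m + (n + 1)) + b * (a + b) ^ (m + 1 + n) := by ring
        _ ≤ a * (a ^ m * (a + b) ^ (n + 1) + b ^ (n + 1) * (a + b) ^ m) +
            b * (a ^ (m + 1) * (a + b) ^ n + b ^ n * (a + b) ^ (m + 1)) := by
          gcongr
          exact ihm (n + 1)
        _ = a ^ (m + 1) * (a + b) ^ (n + 1) + b ^ (n + 1) * (a * (a + b) ^ m) +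
            (a ^ (m + 1) * (b * (a + b) ^ n) + b ^ (n + 1) * (a + b) ^ (m + 1)) := by ring
        _ ≤ _ := by
          apply add_le <;> gcongr

theorem smul_le_smul_of_le {R : Type*} [CommSemiring R] [Algebra R K] (r : R) {a b : K}
    (h : a ≤ b) : r • a ≤ r • b := by
  simp only [Algebra.smul_def]; gcongr

end IdemCommSemiring

def IsSimpleSemiring (K : Type*) [CommSemiring K] : Prop :=
  ∀ I : Set K, 0 ∈ I → (∀ a b, a ∈ I → b ∈ I → a + b ∈ I) → (∀ r a, a ∈ I → r * a ∈ I) →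
    (∀ a b, a + b = b → b ∈ I → a ∈ I) → I = {0} ∨ I = Set.univ

namespace IsSimpleSemiring

variable {K : Type*} [CommSemiring K] (hK : IsSimpleSemiring K)
include hK

theorem eq_zero_of_mem {I : Set K} (h0 : 0 ∈ I) (hadd : ∀ a b, a ∈ I → b ∈ I → a + b ∈ I)
    (hmul : ∀ r a, a ∈ I → r * a ∈ I) (hsat : ∀ a b, a + b = b → b ∈ I → a ∈ I) (h1 : 1 ∉ I)
    {a : K} (ha : a ∈ I) : a = 0 := by
  rcases hK I h0 hadd hmul hsat with rfl | rfl
  · exact ha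
  · exact absurd trivial h1

theorem noZeroDivisors : NoZeroDivisors K where
  eq_zero_or_eq_zero_of_mul_eq_zero {a b} hab := by
    refine or_iff_not_imp_right.2 fun hb => hK.eq_zero_of_mem (I := {c | c * b = 0})
      (zero_mul b) (fun c e hc he => ?_) (fun r c hc => ?_) (fun c e hce he => ?_) ?_ hab
    · simp_all [add_mul]
    · simp_all [mul_assoc]
    · change e * b = 0 at he
      change c * b = 0
      rw [← add_zero (c * b), ← he, ← add_mul, hce]
    · simpa using hb

end IsSimpleSemiring

section satGen

variable {R A : Type*} [CommSemiring R] [CommSemiring A] [Algebra R A] {x : A}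

theorem satGen_subset {S : Set A} (hS : IsSatSubsemiring S) (hx : x ∈ S)
    (hR : Set.range (algebraMap R A) ⊆ S) : satGen R x ⊆ S :=
  Set.sInter_subset_of_mem ⟨hS, hx, hR⟩

theorem self_mem_satGen : x ∈ satGen R x :=
  Set.mem_sInter.2 fun _ hS => hS.2.1

theorem one_mem_satGen : (1 : A) ∈ satGen R x :=
  Set.mem_sInter.2 fun _ hS => hS.1.2.1

theorem add_mem_satGen {a b : A} (ha : a ∈ satGen R x) (hb : b ∈ satGen R x) :
    a + b ∈ satGen R x :=
  Set.mem_sInter.2 fun S hS =>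
    hS.1.2.2.1 a b (Set.mem_sInter.1 ha S hS) (Set.mem_sInter.1 hb S hS)

theorem mul_mem_satGen {a b : A} (ha : a ∈ satGen R x) (hb : b ∈ satGen R x) :
    a * b ∈ satGen R x :=
  Set.mem_sInter.2 fun S hS =>
    hS.1.2.2.2.1 a b (Set.mem_sInter.1 ha S hS) (Set.mem_sInter.1 hb S hS)

end satGen

section Valuation

variable {R K Γ₀ : Type*} [CommSemiring R] [CommSemiring K] [Algebra R K]
  [LinearOrderedCommGroupWithZero Γ₀] {v : K → Γ₀}

theorem eq_zero_of_map_eq_zero (hK : IsSimpleSemiring K) (hv0 : v 0 = 0) (hv1 : v 1 = 1)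
    (hvmul : ∀ a b, v (a * b) = v a * v b) (hvadd : ∀ a b, v (a + b) = max (v a) (v b))
    {a : K} (ha : v a = 0) : a = 0 :=
  hK.eq_zero_of_mem (I := {c | v c = 0}) hv0 (fun c e hc he => by simp_all)
    (fun r c hc => by simp_all)
    (fun c e hce he => by
      have h := hvadd c e
      rw [hce, he] at h
      exact le_antisymm (h ▸ le_max_left _ _) zero_le)
    (by simp [hv1]) ha

theorem IsQuasiIntegralOne.map_le_one {x : K} (hx : IsQuasiIntegralOne R x)
    (hK : IsSimpleSemiring K) (hv0 : v 0 = 0) (hv1 : v 1 = 1)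
    (hvmul : ∀ a b, v (a * b) = v a * v b) (hvadd : ∀ a b, v (a + b) = max (v a) (v b))
    (hvR : ∀ r : R, v (r • (1 : K)) ≤ 1) : v x ≤ 1 := by
  obtain ⟨M, -, -, hMmul, ⟨m₀, hm₀, hfin⟩, hfaith⟩ := hx
  have hv_le {a b : K} (h : a + b = b) : v a ≤ v b := by
    rw [← h, hvadd]; exact le_max_left _ _
  have hvm₀ : v m₀ ≠ 0 := by
    have h10 : (1 : K) ≠ 0 := fun h => by simp [h, hv0] at hv1
    obtain ⟨m, hm, hm0⟩ := hfaith 1 one_mem_satGen h10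
    obtain ⟨r, hr⟩ := hfin m hm
    rintro h
    rw [eq_zero_of_map_eq_zero hK hv0 hv1 hvmul hvadd h, smul_zero, add_zero] at hr
    exact hm0 (by rw [hr, mul_zero])
  obtain ⟨r, hr⟩ := hfin (x * m₀) (hMmul x self_mem_satGen m₀ hm₀)
  have : v x * v m₀ ≤ 1 * v m₀ :=
    calc v x * v m₀ = v (x * m₀) := (hvmul x m₀).symm
      _ ≤ v (r • (1 : K) * m₀) := by rw [smul_one_mul]; exact hv_le hr
      _ ≤ 1 * v m₀ := by rw [hvmul]; gcongr; exact hvR r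
  exact le_of_mul_le_mul_right this (zero_lt_iff.2 hvm₀)

end Valuation

section QuasiIntegral

variable {R K : Type*} [CommSemiring R] [IdemCommSemiring K] [Algebra R K] {x : K}

theorem isQuasiIntegralOne_of_subsingleton [Subsingleton K] : IsQuasiIntegralOne R x :=
  ⟨Set.univ, trivial, fun _ _ _ _ => trivial, fun _ _ _ _ => trivial,
    ⟨0, trivial, fun _ _ => ⟨0, Subsingleton.elim _ _⟩⟩,
    fun _ _ ht => (ht (Subsingleton.elim _ _)).elim⟩

theorem isQuasiIntegralOne_of_mul_le_smul [NoZeroDivisors K] {D : K} (hD : D ≠ 0) {r : R}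
    (hxD : x * D ≤ r • D) : IsQuasiIntegralOne R x := by
  have hbound : satGen R x ⊆ {t | ∃ r : R, t * D ≤ r • D} := by
    refine satGen_subset ⟨⟨0, by simp⟩, ⟨1, by simp⟩, ?_, ?_, ?_⟩ ⟨r, hxD⟩ ?_
    · rintro a b ⟨r₁, h₁⟩ ⟨r₂, h₂⟩
      exact ⟨r₁ + r₂, by rw [add_mul, add_smul]; exact add_le_add h₁ h₂⟩
    · rintro a b ⟨r₁, h₁⟩ ⟨r₂, h₂⟩
      refine ⟨r₂ * r₁, ?_⟩
      calc a * b * D = a * (b * D) := mul_assoc a b D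
        _ ≤ a * (r₂ • D) := by gcongr
        _ = r₂ • (a * D) := mul_smul_comm r₂ a D
        _ ≤ r₂ • (r₁ • D) := smul_le_smul_of_le r₂ h₁
        _ = (r₂ * r₁) • D := (mul_smul r₂ r₁ D).symm
    · rintro a b hab ⟨r', h⟩
      exact ⟨r', le_trans (by gcongr; exact add_eq_right_iff_le.1 hab) h⟩
    · rintro _ ⟨r', rfl⟩
      exact ⟨r', (Algebra.smul_def r' D).ge⟩
  have hD_mem : ∃ t ∈ satGen R x, D ≤ t * D := ⟨1, one_mem_satGen, (one_mul D).ge⟩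
  refine ⟨{a | ∃ t ∈ satGen R x, a ≤ t * D}, ⟨1, one_mem_satGen, zero_le⟩, ?_, ?_,
    ⟨D, hD_mem, ?_⟩, fun t _ ht => ⟨D, hD_mem, mul_ne_zero ht hD⟩⟩
  · rintro a b ⟨t₁, ht₁, h₁⟩ ⟨t₂, ht₂, h₂⟩
    exact ⟨t₁ + t₂, add_mem_satGen ht₁ ht₂, by rw [add_mul]; exact add_le_add h₁ h₂⟩
  · rintro t ht a ⟨t', ht', h⟩
    exact ⟨t * t', mul_mem_satGen ht ht', by rw [mul_assoc]; gcongr⟩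
  · rintro y ⟨t, ht, hy⟩
    obtain ⟨r', hr'⟩ := hbound ht
    exact ⟨r', add_eq_right_iff_le.2 (hy.trans hr')⟩

end QuasiIntegral

section ValuationPreorder

variable {K : Type*} [IdemCommSemiring K]

/-- `Q a b` is to be read as `v a ≤ v b` for a valuation `v` still to be constructed. -/
structure IsValuationPreorder (Q : K → K → Prop) : Prop where
  of_le : ∀ {a b}, a ≤ b → Q a b
  trans : ∀ {a b c}, Q a b → Q b c → Q a c
  add_left : ∀ {a b c}, Q a c → Q b c → Q (a + b) c
  mul_right : ∀ {a b} (c), Q a b → Q (a * c) (b * c)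

/-- Forces `a ≼ b` into `Q` by making `b` and `a + b` the same size. -/
def adjoinLE (Q : K → K → Prop) (a b : K) (c e : K) : Prop :=
  ∃ n : ℕ, Q (c * b ^ n) (e * (a + b) ^ n)

theorem le_adjoinLE (Q : K → K → Prop) (a b : K) : Q ≤ adjoinLE Q a b :=
  fun c e h => ⟨0, by simpa using h⟩

namespace IsValuationPreorder

variable {Q : K → K → Prop} (hQ : IsValuationPreorder Q)
include hQ

theorem refl (a : K) : Q a a := hQ.of_le le_rfl

theorem mul_left {a b : K} (c : K) (h : Q a b) : Q (c * a) (c * b) := by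
  simpa only [mul_comm c] using hQ.mul_right c h

theorem mul {a b c e : K} (h₁ : Q a b) (h₂ : Q c e) : Q (a * c) (b * e) :=
  hQ.trans (hQ.mul_right c h₁) (hQ.mul_left b h₂)

theorem pow {a b : K} (h : Q a b) (n : ℕ) : Q (a ^ n) (b ^ n) := by
  induction n with
  | zero => simpa using hQ.refl 1
  | succ n ih => simpa only [pow_succ] using hQ.mul ih h

theorem adjoinLE_of_le {a b c e : K} {n m : ℕ} (h : Q (c * b ^ n) (e * (a + b) ^ n))
    (hnm : n ≤ m) : Q (c * b ^ m) (e * (a + b) ^ m) := by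
  obtain ⟨k, rfl⟩ := Nat.exists_eq_add_of_le hnm
  have hb : b ^ k ≤ (a + b) ^ k := by gcongr; exact le_add_self
  simpa only [pow_add, mul_assoc] using hQ.mul h (hQ.of_le hb)

theorem adjoinLE (a b : K) : IsValuationPreorder (_root_.adjoinLE Q a b) where
  of_le h := ⟨0, by simpa using hQ.of_le h⟩
  trans := by
    rintro c e f ⟨n, h₁⟩ ⟨m, h₂⟩
    refine ⟨n + m, ?_⟩
    have h₁' := hQ.mul_right (b ^ m) h₁
    have h₂' := hQ.mul_right ((a + b) ^ n) h₂
    rw [mul_right_comm e] at h₁'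
    convert hQ.trans h₁' h₂' using 1 <;> ring
  add_left := by
    rintro c e f ⟨n, h₁⟩ ⟨m, h₂⟩
    refine ⟨n + m, ?_⟩
    rw [add_mul]
    exact hQ.add_left (hQ.adjoinLE_of_le h₁ (Nat.le_add_right n m))
      (hQ.adjoinLE_of_le h₂ (Nat.le_add_left m n))
  mul_right := by
    rintro c e f ⟨n, h⟩
    exact ⟨n, by simpa only [mul_right_comm _ f] using hQ.mul_right f h⟩

theorem adjoinLE_self (a b : K) : _root_.adjoinLE Q a b a b :=
  ⟨1, hQ.of_le (by rw [pow_one, pow_one, mul_comm b, add_mul]; exact le_self_add)⟩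

theorem eq_zero_of_le_zero (hK : IsSimpleSemiring K) (h10 : ¬ Q 1 0) {a : K} (ha : Q a 0) :
    a = 0 :=
  hK.eq_zero_of_mem (I := {c | Q c 0}) (hQ.refl 0) (fun _ _ => hQ.add_left)
    (fun r c hc => show Q (r * c) 0 by simpa only [mul_comm c, zero_mul] using hQ.mul_right r hc)
    (fun _ _ h => hQ.trans (hQ.of_le (add_eq_right_iff_le.1 h))) h10 ha

end IsValuationPreorder

end ValuationPreorder

section OneLtPreorder

variable {K : Type*} [IdemCommSemiring K] {x : K} {Q : K → K → Prop}

structure IsOneLtPreorder (x : K) (Q : K → K → Prop) : Prop extends IsValuationPreorder Q where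
  not_one_le_zero : ¬ Q 1 0
  le_zero_of_mul_le : ∀ D, Q (x * D) D → Q D 0

namespace IsOneLtPreorder

theorem exists_maximal (hQ : IsOneLtPreorder x Q) :
    ∃ Q', Q ≤ Q' ∧ Maximal (IsOneLtPreorder x) Q' := by
  refine zorn_le_nonempty₀ {Q | IsOneLtPreorder x Q} (fun c hc hchain P hP => ?_) Q hQ
  have hdir := hchain.directedOn
  refine ⟨fun a b => ∃ P ∈ c, P a b, ⟨⟨?_, ?_, ?_, ?_⟩, ?_, ?_⟩, fun P hP a b h => ⟨P, hP, h⟩⟩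
  · exact fun h => ⟨P, hP, (hc hP).of_le h⟩
  · rintro a b e ⟨P₁, hP₁, h₁⟩ ⟨P₂, hP₂, h₂⟩
    obtain ⟨P, hP, hle₁, hle₂⟩ := hdir P₁ hP₁ P₂ hP₂
    exact ⟨P, hP, (hc hP).trans (hle₁ _ _ h₁) (hle₂ _ _ h₂)⟩
  · rintro a b e ⟨P₁, hP₁, h₁⟩ ⟨P₂, hP₂, h₂⟩
    obtain ⟨P, hP, hle₁, hle₂⟩ := hdir P₁ hP₁ P₂ hP₂
    exact ⟨P, hP, (hc hP).add_left (hle₁ _ _ h₁) (hle₂ _ _ h₂)⟩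
  · rintro a b e ⟨P, hP, h⟩
    exact ⟨P, hP, (hc hP).mul_right e h⟩
  · rintro ⟨P, hP, h⟩
    exact (hc hP).not_one_le_zero h
  · rintro D ⟨P, hP, h⟩
    exact ⟨P, hP, (hc hP).le_zero_of_mul_le D h⟩

variable [NoZeroDivisors K] (hQ : Maximal (IsOneLtPreorder x) Q) (hker : ∀ a, Q a 0 → a = 0)
include hQ hker

theorem exists_mul_pow_le_of_maximal {a b : K} (hb : b ≠ 0) (hab : ¬ Q a b) :
    ∃ D ≠ 0, ∃ n : ℕ, Q (x * (D * b ^ n)) (D * (a + b) ^ n) := by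
  have hQ' := hQ.prop.toIsValuationPreorder
  by_contra! hcon
  refine hab (hQ.2 ⟨hQ'.adjoinLE a b, ?_, fun D hD => ?_⟩ (le_adjoinLE Q a b) a b
    (hQ'.adjoinLE_self a b))
  · rintro ⟨n, hn⟩
    rw [one_mul, zero_mul] at hn
    exact pow_ne_zero n hb (hker _ hn)
  · obtain ⟨n, hn⟩ := hD
    obtain rfl | hD0 := eq_or_ne D 0
    · exact le_adjoinLE Q a b 0 0 (hQ'.refl 0)
    · exact (hcon D hD0 n (by rwa [← mul_assoc])).elim

theorem total_of_maximal (a b : K) : Q a b ∨ Q b a := by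
  have hQ' := hQ.prop.toIsValuationPreorder
  by_contra! h
  obtain ⟨hab, hba⟩ := h
  have ha : a ≠ 0 := by rintro rfl; exact hab (hQ'.of_le zero_le)
  have hb : b ≠ 0 := by rintro rfl; exact hba (hQ'.of_le zero_le)
  have hs : a + b ≠ 0 := by simp [ha]
  obtain ⟨D, hD, n, hDn⟩ := exists_mul_pow_le_of_maximal hQ hker hb hab
  obtain ⟨E, hE, m, hEm⟩ := exists_mul_pow_le_of_maximal hQ hker ha hba
  rw [add_comm b a] at hEm
  set P := D * E * (a + b) ^ (m + n)
  have hP : Q (x * P) P := by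
    have h₁ := hQ'.mul_right (D * (a + b) ^ n) hEm
    have h₂ := hQ'.mul_right (E * (a + b) ^ m) hDn
    refine hQ'.trans (hQ'.of_le ?_) (hQ'.add_left (c := P) (by convert h₁ using 1; ring)
      (by convert h₂ using 1; ring))
    calc x * P = x * (D * E) * (a + b) ^ (m + n) := by ring
      _ ≤ x * (D * E) * (a ^ m * (a + b) ^ n + b ^ n * (a + b) ^ m) := by
        gcongr; exact add_pow_add_le a b m n
      _ = _ := by ring
  exact mul_ne_zero (mul_ne_zero hD hE) (pow_ne_zero _ hs)
    (hker _ (hQ.prop.le_zero_of_mul_le P hP))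

theorem le_of_mul_le_mul_right_of_maximal {a b c : K} (h : Q (a * c) (b * c)) (hc : c ≠ 0) :
    Q a b := by
  have hQ' := hQ.prop.toIsValuationPreorder
  by_contra hab
  obtain rfl | hb := eq_or_ne b 0
  · rw [zero_mul] at h
    obtain rfl := (mul_eq_zero.1 (hker _ h)).resolve_right hc
    exact hab (hQ'.refl 0)
  obtain ⟨D, hD, n, hDn⟩ := exists_mul_pow_le_of_maximal hQ hker hb hab
  have hs : Q ((a + b) * c) (b * c) := by rw [add_mul]; exact hQ'.add_left h (hQ'.refl _)
  set P := D * b ^ n * c ^ n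
  have hP : Q (x * P) P := by
    have h₁ := hQ'.mul_right (c ^ n) hDn
    have h₂ := hQ'.mul_left D (hQ'.pow hs n)
    rw [mul_pow, mul_pow] at h₂
    exact hQ'.trans (by convert h₁ using 1; ring) (by convert h₂ using 1 <;> ring)
  exact mul_ne_zero (mul_ne_zero hD (pow_ne_zero _ hb)) (pow_ne_zero _ hc)
    (hker _ (hQ.prop.le_zero_of_mul_le P hP))

end IsOneLtPreorder

end OneLtPreorder

theorem Algebra.GrothendieckGroup.of_le_of {M : Type*} [CommMonoid M] [PartialOrder M]
    [IsOrderedCancelMonoid M] {m n : M} : of m ≤ of n ↔ m ≤ n :=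
  (Localization.mk_le_mk (a₁ := m) (a₂ := 1) (b₁ := n) (b₂ := 1)).trans (by simp)

structure ValuationPreorder (K : Type*) [IdemCommSemiring K] where
  rel : K → K → Prop
  isValuationPreorder : IsValuationPreorder rel
  total : ∀ a b, rel a b ∨ rel b a
  rel_of_mul_rel_mul : ∀ {a b c}, rel (a * c) (b * c) → c ≠ 0 → rel a b
  eq_zero_of_rel_zero : ∀ {a}, rel a 0 → a = 0

namespace ValuationPreorder

open Algebra

variable {K : Type*} [IdemCommSemiring K] [NoZeroDivisors K] (d : ValuationPreorder K)

def equiv : Con (nonZeroDivisors K) where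
  r a b := d.rel a b ∧ d.rel b a
  iseqv :=
    ⟨fun _ => ⟨d.isValuationPreorder.refl _, d.isValuationPreorder.refl _⟩,
      fun h => ⟨h.2, h.1⟩,
      fun h₁ h₂ => ⟨d.isValuationPreorder.trans h₁.1 h₂.1, d.isValuationPreorder.trans h₂.2 h₁.2⟩⟩
  mul' h₁ h₂ := ⟨d.isValuationPreorder.mul h₁.1 h₂.1, d.isValuationPreorder.mul h₁.2 h₂.2⟩

abbrev ValueMonoid : Type _ := d.equiv.Quotient

noncomputable instance : LinearOrder d.ValueMonoid where
  le p q := Con.liftOn₂ p q (fun a b => d.rel a b) fun _ _ _ _ h₁ h₂ =>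
    propext ⟨fun h => d.isValuationPreorder.trans h₁.2 (d.isValuationPreorder.trans h h₂.1),
      fun h => d.isValuationPreorder.trans h₁.1 (d.isValuationPreorder.trans h h₂.2)⟩
  le_refl p := Con.induction_on p fun a => d.isValuationPreorder.refl a
  le_trans p q r := Con.induction_on₂ p q fun _ _ =>
    Con.induction_on r fun _ => d.isValuationPreorder.trans
  le_antisymm p q := Con.induction_on₂ p q fun _ _ h₁ h₂ => Con.eq _ |>.2 ⟨h₁, h₂⟩
  le_total p q := Con.induction_on₂ p q fun a b => d.total a b
  toDecidableLE := Classical.decRel _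

abbrev ValueGroup : Type _ := GrothendieckGroup d.ValueMonoid

noncomputable def valuation (a : K) : WithZero d.ValueGroup :=
  open Classical in
  if h : a = 0 then 0
  else GrothendieckGroup.of (d.equiv.mk' ⟨a, mem_nonZeroDivisors_of_ne_zero h⟩)

theorem valuation_of_ne_zero {a : K} (h : a ≠ 0) :
    d.valuation a = GrothendieckGroup.of (d.equiv.mk' ⟨a, mem_nonZeroDivisors_of_ne_zero h⟩) :=
  dif_neg h

theorem valuation_zero : d.valuation 0 = 0 := dif_pos rfl

theorem valuation_mul (a b : K) : d.valuation (a * b) = d.valuation a * d.valuation b := by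
  obtain rfl | ha := eq_or_ne a 0
  · simp [valuation_zero]
  obtain rfl | hb := eq_or_ne b 0
  · simp [valuation_zero]
  rw [valuation_of_ne_zero d ha, valuation_of_ne_zero d hb,
    valuation_of_ne_zero d (mul_ne_zero ha hb), ← WithZero.coe_mul, ← map_mul, ← map_mul]
  rfl

variable [Nontrivial K]

instance : IsOrderedCancelMonoid d.ValueMonoid where
  mul_le_mul_left p q := Con.induction_on₂ p q fun _ _ h r =>
    Con.induction_on r fun c => d.isValuationPreorder.mul_right c h
  le_of_mul_le_mul_left p q r := Con.induction_on₂ p q fun a b =>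
    Con.induction_on r fun c (h : d.rel (a * b) (a * c)) =>
      d.rel_of_mul_rel_mul (by simpa only [mul_comm (a : K)] using h)
        (nonZeroDivisors.ne_zero a.2)

theorem valuation_one : d.valuation 1 = 1 := by
  rw [valuation_of_ne_zero d one_ne_zero, ← WithZero.coe_one, WithZero.coe_inj]
  exact (congrArg _ (map_one d.equiv.mk')).trans (map_one _)

theorem valuation_le_valuation_iff (a b : K) : d.valuation a ≤ d.valuation b ↔ d.rel a b := by
  obtain rfl | ha := eq_or_ne a 0
  · simpa [valuation_zero] using d.isValuationPreorder.of_le zero_le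
  obtain rfl | hb := eq_or_ne b 0
  · simpa [valuation_zero, valuation_of_ne_zero d ha] using
      fun h => ha (d.eq_zero_of_rel_zero h)
  rw [valuation_of_ne_zero d ha, valuation_of_ne_zero d hb, WithZero.coe_le_coe,
    GrothendieckGroup.of_le_of]
  rfl

theorem valuation_add (a b : K) :
    d.valuation (a + b) = max (d.valuation a) (d.valuation b) := by
  have hQ := d.isValuationPreorder
  simp only [le_antisymm_iff, max_le_iff, le_max_iff, valuation_le_valuation_iff]
  refine ⟨?_, hQ.of_le le_self_add, hQ.of_le le_add_self⟩
  rcases d.total a b with h | h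
  · exact Or.inr (hQ.add_left h (hQ.refl b))
  · exact Or.inl (hQ.add_left (hQ.refl a) h)

end ValuationPreorder

section NotQuasiIntegral

variable {R K : Type*} [CommSemiring R] [IdemCommSemiring K] [Algebra R K] {x : K}

theorem isOneLtPreorder_le_smul [NoZeroDivisors K] [Nontrivial K]
    (hx : ¬ IsQuasiIntegralOne R x) : IsOneLtPreorder x (fun a b => ∃ r : R, a ≤ r • b) where
  of_le h := ⟨1, by rwa [one_smul]⟩
  trans := by
    rintro a b c ⟨r, h₁⟩ ⟨s, h₂⟩
    exact ⟨r * s, by rw [mul_smul]; exact h₁.trans (smul_le_smul_of_le r h₂)⟩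
  add_left := by
    rintro a b c ⟨r, h₁⟩ ⟨s, h₂⟩
    exact ⟨r + s, by rw [add_smul]; exact add_le_add h₁ h₂⟩
  mul_right := by
    rintro a b c ⟨r, h⟩
    exact ⟨r, by rw [← smul_mul_assoc]; gcongr⟩
  not_one_le_zero := by
    rintro ⟨r, h⟩
    exact one_ne_zero (le_zero_iff.1 (h.trans (smul_zero r).le))
  le_zero_of_mul_le D := by
    rintro ⟨r, h⟩
    obtain rfl : D = 0 := by_contra fun hD => hx (isQuasiIntegralOne_of_mul_le_smul hD h)
    exact ⟨0, zero_le⟩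

end NotQuasiIntegral

theorem exists_valuation_of_not_isQuasiIntegralOne {R : Type*} {K : Type u} [CommSemiring R]
    [IdemCommSemiring K] [Algebra R K] (hK : IsSimpleSemiring K) {x : K}
    (hx : ¬ IsQuasiIntegralOne R x) :
    ∃ (Γ : Type u) (_ : CommGroup Γ) (_ : LinearOrder Γ) (_ : IsOrderedMonoid Γ)
      (v : K → WithZero Γ), v 0 = 0 ∧ v 1 = 1 ∧ (∀ a b, v (a * b) = v a * v b) ∧
      (∀ a b, v (a + b) = max (v a) (v b)) ∧ (∀ r : R, v (r • (1 : K)) ≤ 1) ∧ 1 < v x := by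
  have := hK.noZeroDivisors
  have : Nontrivial K := by
    by_contra h
    exact hx (have := not_nontrivial_iff_subsingleton.1 h; isQuasiIntegralOne_of_subsingleton)
  obtain ⟨Q, hQ₀Q, hQ⟩ := (isOneLtPreorder_le_smul hx).exists_maximal
  have hker {a : K} := hQ.prop.eq_zero_of_le_zero hK hQ.prop.not_one_le_zero (a := a)
  let d : ValuationPreorder K :=
    ⟨Q, hQ.prop.1, IsOneLtPreorder.total_of_maximal hQ @hker,
      IsOneLtPreorder.le_of_mul_le_mul_right_of_maximal hQ @hker, hker⟩
  refine ⟨d.ValueGroup, inferInstance, inferInstance, inferInstance, d.valuation,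
    d.valuation_zero, d.valuation_one, d.valuation_mul, d.valuation_add, fun r => ?_, ?_⟩
  · rw [← d.valuation_one, d.valuation_le_valuation_iff]
    exact hQ₀Q _ _ ⟨r, le_rfl⟩
  · rw [← d.valuation_one, lt_iff_not_ge, d.valuation_le_valuation_iff]
    exact fun h => hQ.prop.not_one_le_zero (hQ.prop.le_zero_of_mul_le 1 (by rwa [mul_one]))

theorem statement15_general {R : Type*} {K : Type u} [CommSemiring R] [CommSemiring K]
    [Algebra R K]
    (hK : ∀ a : K, a + a = a)
    (hsimple : ∀ I : Set K,
      0 ∈ I →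
      (∀ a b, a ∈ I → b ∈ I → a + b ∈ I) →
      (∀ r a, a ∈ I → r * a ∈ I) →
      (∀ a b, a + b = b → b ∈ I → a ∈ I) →
      I = {0} ∨ I = Set.univ)
    (x : K) :
    IsQuasiIntegralOne R x ↔
      ∀ (Γ : Type u) [CommGroup Γ] [LinearOrder Γ] [IsOrderedMonoid Γ] (v : K → WithZero Γ),
        v 0 = 0 → v 1 = 1 → (∀ a b, v (a * b) = v a * v b) →
        (∀ a b, v (a + b) = max (v a) (v b)) →
        (∀ r : R, v (r • (1 : K)) ≤ 1) → v x ≤ 1 := by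
  refine ⟨fun hx Γ _ _ _ v => hx.map_le_one hsimple, fun hv => ?_⟩
  let : IdemCommSemiring K := { ‹CommSemiring K›, IdemSemiring.ofSemiring hK with }
  by_contra hx
  obtain ⟨Γ, _, _, _, v, hv0, hv1, hvmul, hvadd, hvR, hvx⟩ :=
    exists_valuation_of_not_isQuasiIntegralOne hsimple hx
  exact hvx.not_ge (hv Γ v hv0 hv1 hvmul hvadd hvR)

/-- Let `R` be an idempotent semiring, `K` a simple `R`-algebra (an
idempotent semiring), `x ∈ K`.  Then `x` is quasiintegral over `R` iff every
homomorphism `v : K → Γ_max` (for a linearly ordered abelian group `Γ`) with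
`v (r • 1) ≤ 1` for all `r ∈ R` also satisfies `v x ≤ 1`. -/
theorem statement15 {R : Type*} {K : Type u} [CommSemiring R] [CommSemiring K]
    [Algebra R K]
    (hR : ∀ r : R, r + r = r) (hK : ∀ a : K, a + a = a)
    (hsimple : ∀ I : Set K,
      0 ∈ I →
      (∀ a b, a ∈ I → b ∈ I → a + b ∈ I) →
      (∀ r a, a ∈ I → r * a ∈ I) →
      (∀ a b, a + b = b → b ∈ I → a ∈ I) →
      I = {0} ∨ I = Set.univ)
    (x : K) :
    IsQuasiIntegralOne R x ↔
      ∀ (Γ : Type u) [CommGroup Γ] [LinearOrder Γ] [IsOrderedMonoid Γ] (v : K → WithZero Γ),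
        v 0 = 0 → v 1 = 1 → (∀ a b, v (a * b) = v a * v b) →
        (∀ a b, v (a + b) = max (v a) (v b)) →
        (∀ r : R, v (r • (1 : K)) ≤ 1) → v x ≤ 1 :=
  statement15_general hK hsimple x
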